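/- arXiv:math/0603692 — 5 statements merged into one kernel-verified Lean document; each statement's English description precedes it below -/
import Mathlib

section
/- The function Q(x) = 3^{1/4} / sqrt(cosh(2x)) satisfies the ordinary differential equation Q'' - Q + |Q|^4 Q = 0 on the real line. -/
/-!
Write `Q = c · cosh(2x)^(-1/2)` with `c = 3^(1/4)`. Differentiating `cosh(kx)^(-r)` twice and
eliminating `sinh²` through `cosh² - sinh² = 1` gives
`(cosh(kx)^(-r))'' = (rk)² cosh(kx)^(-r) - r(r+1)k² cosh(kx)^(-r-2)`, so for `r = 1/2`, `k = 2`,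
`Q'' = Q - 3c · cosh(2x)^(-5/2)`. Since `c⁴ = 3`, the last term is exactly `Q⁵ = |Q|⁴ Q`.
-/

open Real

theorem hasDerivAt_cosh_mul_rpow_neg (k r x : ℝ) :
    HasDerivAt (fun x => cosh (k * x) ^ (-r))
      (-(r * k) * sinh (k * x) * cosh (k * x) ^ (-(r + 1))) x := by
  convert ((hasDerivAt_const_mul k).cosh.rpow_const (p := -r)
    (Or.inl (cosh_pos (k * x)).ne')) using 1
  rw [neg_add']
  ring

theorem deriv_cosh_mul_rpow_neg (k r : ℝ) :
    deriv (fun x => cosh (k * x) ^ (-r)) =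
      fun x => -(r * k) * sinh (k * x) * cosh (k * x) ^ (-(r + 1)) :=
  funext fun x => (hasDerivAt_cosh_mul_rpow_neg k r x).deriv

theorem deriv_deriv_cosh_mul_rpow_neg (k r x : ℝ) :
    deriv (deriv fun x => cosh (k * x) ^ (-r)) x =
      (r * k) ^ 2 * cosh (k * x) ^ (-r) - r * (r + 1) * k ^ 2 * cosh (k * x) ^ (-r - 2) := by
  have hcosh : 0 < cosh (k * x) := cosh_pos (k * x)
  have hpow2 : cosh (k * x) ^ (-r) = cosh (k * x) ^ (-r - 2) * cosh (k * x) ^ 2 := by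
    rw [← rpow_natCast, ← rpow_add hcosh]; norm_num
  have hpow1 : cosh (k * x) ^ (-(r + 1)) = cosh (k * x) ^ (-r - 2) * cosh (k * x) := by
    rw [← rpow_add_one hcosh.ne']; ring_nf
  have h := ((hasDerivAt_const_mul k).sinh.const_mul (-(r * k))).fun_mul
    (hasDerivAt_cosh_mul_rpow_neg k (r + 1) x)
  rw [deriv_cosh_mul_rpow_neg, h.deriv, show -(r + 1 + 1) = -r - 2 by ring, hpow1, hpow2]
  linear_combination -(r * (r + 1) * k ^ 2 * cosh (k * x) ^ (-r - 2)) * cosh_sq (k * x)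

/-- The ground state `Q(x) = 3^{1/4} / √(cosh 2x)` solves `Q'' - Q + |Q|⁴ Q = 0` on ℝ. -/
theorem ground_state_solves_ode
    (Q : ℝ → ℝ)
    (hQ : Q = fun x : ℝ => (3 : ℝ) ^ ((1 : ℝ) / 4) / Real.sqrt (Real.cosh (2 * x))) :
    ∀ x : ℝ, deriv (deriv Q) x - Q x + |Q x| ^ 4 * Q x = 0 := by
  set c : ℝ := (3 : ℝ) ^ ((1 : ℝ) / 4)
  have hc : c ^ 4 = 3 := by
    rw [← rpow_natCast, ← rpow_mul (by norm_num)]; norm_num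
  replace hQ : Q = fun x => c * cosh (2 * x) ^ (-(1 / 2 : ℝ)) := by
    rw [hQ]; funext x
    rw [sqrt_eq_rpow, rpow_neg (cosh_pos _).le, div_eq_mul_inv]
  intro x
  have hcosh : 0 < cosh (2 * x) := cosh_pos (2 * x)
  have hQ_pos : 0 < Q x := by
    rw [hQ]; exact mul_pos (by positivity) (rpow_pos_of_pos hcosh _)
  have hQ_pow_five : |Q x| ^ 4 * Q x = 3 * c * cosh (2 * x) ^ (-(1 / 2 : ℝ) - 2) := by
    rw [abs_of_pos hQ_pos, hQ, mul_pow, ← rpow_mul_natCast hcosh.le, hc, sub_eq_add_neg,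
      rpow_add hcosh, show -(1 / 2 : ℝ) * (4 : ℕ) = -2 by norm_num]
    ring
  rw [hQ_pow_five, hQ, deriv_const_mul_field']
  simp only [deriv_const_mul_field', deriv_deriv_cosh_mul_rpow_neg]
  ring
end

section
/- Let r > 2 and u ∈ L²(ℝ) ∩ L^r(ℝ). Then the concentration function ρ(u,·) is Hölder continuous: there exists C = C(r) such that for all s,t > 0, |ρ(u,t) − ρ(u,s)| ≤ C ‖u‖_{L^r}² |t−s|^{(r−2)/r}. -/
open MeasureTheory Set
open scoped ENNReal

/-!
The interval `(y - t, y + t)` is covered by `(y - s, y + s)` and two intervals of length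
`t - s`. On a set `A` of finite measure, Hölder's inequality gives
`∫_A |u|² ≤ ‖u‖_r² |A|^{(r-2)/r}`, so `ρ(u, ·)` is monotone with
`ρ(u, t) ≤ ρ(u, s) + 2 ‖u‖_r² (t - s)^{(r-2)/r}` for `s ≤ t`, and one can take `C = 2`.
-/

/-- The concentration function `ρ(u,t) = sup_y ∫_{|x-y|<t} |u|²`. -/
noncomputable def concentration (u : ℝ → ℂ) (t : ℝ) : ℝ :=
  ⨆ y : ℝ, ∫ x in Ioo (y - t) (y + t), ‖u x‖ ^ 2

section Integral

variable {α E : Type*} [MeasurableSpace α] [NormedAddCommGroup E] {μ : Measure α}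

theorem MeasureTheory.MemLp.integrable_norm_sq {f : α → E} (hf : MemLp f 2 μ) :
    Integrable (fun x => ‖f x‖ ^ 2) μ :=
  hf.integrable_norm_pow (p := 2) two_ne_zero

theorem MeasureTheory.MemLp.integral_norm_sq_eq {f : α → E} (hf : MemLp f 2 μ) :
    ∫ x, ‖f x‖ ^ 2 ∂μ = (eLpNorm f 2 μ).toReal ^ 2 := by
  have hint : 0 ≤ ∫ x, ‖f x‖ ^ (2 : ℝ) ∂μ := integral_nonneg fun _ => by positivity
  rw [hf.eLpNorm_eq_integral_rpow_norm two_ne_zero ENNReal.ofNat_ne_top, ENNReal.toReal_ofNat,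
    ENNReal.toReal_ofReal (by positivity), ← Real.rpow_natCast, ← Real.rpow_mul hint]
  norm_num

theorem setIntegral_norm_sq_le {u : α → E} {r : ℝ} (hr : 2 ≤ r)
    (hu : MemLp u (ENNReal.ofReal r) μ) {A : Set α} (hA : μ A ≠ ∞) :
    ∫ x in A, ‖u x‖ ^ 2 ∂μ
      ≤ (eLpNorm u (ENNReal.ofReal r) μ).toReal ^ 2 * (μ A).toReal ^ ((r - 2) / r) := by
  have : IsFiniteMeasure (μ.restrict A) := isFiniteMeasure_restrict.2 hA
  have h2r : (2 : ℝ≥0∞) ≤ ENNReal.ofReal r := by simpa using ENNReal.ofReal_le_ofReal hr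
  have huA : MemLp u 2 (μ.restrict A) := (hu.restrict A).mono_exponent h2r
  have hexp : (1 / (2 : ℝ≥0∞).toReal - 1 / (ENNReal.ofReal r).toReal) * 2 = (r - 2) / r := by
    rw [ENNReal.toReal_ofReal (by linarith), ENNReal.toReal_ofNat]
    field_simp
  have hle : eLpNorm u 2 (μ.restrict A) ^ 2
      ≤ eLpNorm u (ENNReal.ofReal r) μ ^ 2 * μ A ^ ((r - 2) / r) := by
    calc eLpNorm u 2 (μ.restrict A) ^ 2
        ≤ (eLpNorm u (ENNReal.ofReal r) (μ.restrict A) * μ.restrict A univ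
            ^ (1 / (2 : ℝ≥0∞).toReal - 1 / (ENNReal.ofReal r).toReal)) ^ 2 := by
          gcongr
          exact eLpNorm_le_eLpNorm_mul_rpow_measure_univ h2r huA.1
      _ ≤ (eLpNorm u (ENNReal.ofReal r) μ * μ A
            ^ (1 / (2 : ℝ≥0∞).toReal - 1 / (ENNReal.ofReal r).toReal)) ^ 2 := by
          rw [Measure.restrict_apply_univ]
          gcongr
          exact Measure.restrict_le_self
      _ = eLpNorm u (ENNReal.ofReal r) μ ^ 2 * μ A ^ ((r - 2) / r) := by
          rw [mul_pow, ← ENNReal.rpow_natCast (_ ^ _), ← ENNReal.rpow_mul, Nat.cast_ofNat, hexp]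
  have hfin : eLpNorm u (ENNReal.ofReal r) μ ^ 2 * μ A ^ ((r - 2) / r) ≠ ∞ :=
    ENNReal.mul_ne_top (ENNReal.pow_ne_top hu.eLpNorm_ne_top)
      (ENNReal.rpow_ne_top_of_nonneg (div_nonneg (by linarith) (by linarith)) hA)
  rw [huA.integral_norm_sq_eq]
  simpa only [ENNReal.toReal_mul, ENNReal.toReal_pow, ENNReal.toReal_rpow]
    using ENNReal.toReal_mono hfin hle

theorem setIntegral_union_le_add {f : α → ℝ} (hf : Integrable f μ) (hf0 : ∀ x, 0 ≤ f x)
    {s t : Set α} (hs : MeasurableSet s) (ht : MeasurableSet t) :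
    ∫ x in s ∪ t, f x ∂μ ≤ ∫ x in s, f x ∂μ + ∫ x in t, f x ∂μ := by
  rw [← union_sdiff_self, setIntegral_union disjoint_sdiff_right (ht.diff hs) hf.integrableOn
    hf.integrableOn]
  exact add_le_add_right
    (setIntegral_mono_set hf.integrableOn (ae_of_all _ hf0) sdiff_subset.eventuallyLE) _

end Integral

theorem Monotone.abs_sub_le_of_le_add {f g : ℝ → ℝ} (hf : Monotone f)
    (h : ∀ a b, a ≤ b → f b ≤ f a + g (b - a)) (s t : ℝ) : |f t - f s| ≤ g |t - s| := by
  rcases le_total s t with hst | hts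
  · rw [abs_of_nonneg (sub_nonneg.2 (hf hst)), abs_of_nonneg (sub_nonneg.2 hst)]
    linarith [h s t hst]
  · rw [abs_sub_comm, abs_sub_comm t, abs_of_nonneg (sub_nonneg.2 (hf hts)),
      abs_of_nonneg (sub_nonneg.2 hts)]
    linarith [h t s hts]

section Concentration

variable {u : ℝ → ℂ}

theorem setIntegral_Ioo_le_concentration (hu : Integrable (fun x => ‖u x‖ ^ 2)) (y t : ℝ) :
    ∫ x in Ioo (y - t) (y + t), ‖u x‖ ^ 2 ≤ concentration u t :=
  le_ciSup (f := fun z => ∫ x in Ioo (z - t) (z + t), ‖u x‖ ^ 2) ⟨∫ x, ‖u x‖ ^ 2, by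
    rintro _ ⟨z, rfl⟩
    exact setIntegral_le_integral hu (ae_of_all _ fun _ => by positivity)⟩ y

theorem concentration_mono (hu : Integrable (fun x => ‖u x‖ ^ 2)) :
    Monotone (concentration u) := fun a b hab =>
  ciSup_le fun y =>
    (setIntegral_mono_set hu.integrableOn (ae_of_all _ fun _ => by positivity)
      (Ioo_subset_Ioo (by linarith) (by linarith)).eventuallyLE).trans
      (setIntegral_Ioo_le_concentration hu y b)

theorem concentration_le_add {r : ℝ} (hr : 2 ≤ r) (hu2 : MemLp u 2 volume)
    (hur : MemLp u (ENNReal.ofReal r) volume) {a b : ℝ} (hab : a ≤ b) :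
    concentration u b ≤ concentration u a
      + 2 * ((eLpNorm u (ENNReal.ofReal r) volume).toReal ^ 2 * (b - a) ^ ((r - 2) / r)) := by
  set B := (eLpNorm u (ENNReal.ofReal r) volume).toReal ^ 2 * (b - a) ^ ((r - 2) / r)
  have hu := hu2.integrable_norm_sq
  have hside : ∀ c d, d - c = b - a → ∫ x in Icc c d, ‖u x‖ ^ 2 ≤ B := fun c d hcd => by
    simpa [Real.volume_Icc, hcd, sub_nonneg.2 hab] using
      setIntegral_norm_sq_le hr hur (A := Icc c d) (by simp [Real.volume_Icc])
  refine ciSup_le fun y => ?_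
  have hcover : Ioo (y - b) (y + b)
      ⊆ Icc (y - b) (y - a) ∪ Ioo (y - a) (y + a) ∪ Icc (y + a) (y + b) := by
    intro x ⟨h₁, h₂⟩
    by_cases hl : x ≤ y - a
    · exact .inl (.inl ⟨h₁.le, hl⟩)
    by_cases hm : x < y + a
    · exact .inl (.inr ⟨not_le.1 hl, hm⟩)
    · exact .inr ⟨not_lt.1 hm, h₂.le⟩
  have hnonneg : ∀ x, 0 ≤ ‖u x‖ ^ 2 := fun _ => by positivity
  calc ∫ x in Ioo (y - b) (y + b), ‖u x‖ ^ 2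
      ≤ ∫ x in Icc (y - b) (y - a) ∪ Ioo (y - a) (y + a) ∪ Icc (y + a) (y + b), ‖u x‖ ^ 2 :=
        setIntegral_mono_set hu.integrableOn (ae_of_all _ hnonneg) hcover.eventuallyLE
    _ ≤ (∫ x in Icc (y - b) (y - a), ‖u x‖ ^ 2) + (∫ x in Ioo (y - a) (y + a), ‖u x‖ ^ 2)
          + ∫ x in Icc (y + a) (y + b), ‖u x‖ ^ 2 := by
        refine (setIntegral_union_le_add hu hnonneg (measurableSet_Icc.union measurableSet_Ioo)
          measurableSet_Icc).trans (add_le_add_left ?_ _)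
        exact setIntegral_union_le_add hu hnonneg measurableSet_Icc measurableSet_Ioo
    _ ≤ B + concentration u a + B := by
        gcongr
        · exact hside _ _ (by ring)
        · exact setIntegral_Ioo_le_concentration hu y a
        · exact hside _ _ (by ring)
    _ = concentration u a + 2 * B := by ring

end Concentration

/-- For `r > 2` there is a constant `C = C(r)` such that for every
`u ∈ L²(ℝ) ∩ L^r(ℝ)` the concentration function is Hölder continuous:
`|ρ(u,t) − ρ(u,s)| ≤ C ‖u‖_{L^r}² |t−s|^{(r−2)/r}` for all `s, t > 0`. -/
theorem concentration_holder (r : ℝ) (hr : 2 < r) :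
    ∃ C : ℝ, ∀ u : ℝ → ℂ,
      MemLp u 2 (volume : Measure ℝ) →
      MemLp u (ENNReal.ofReal r) (volume : Measure ℝ) →
      ∀ s t : ℝ, 0 < s → 0 < t →
        |concentration u t - concentration u s|
          ≤ C * (eLpNorm u (ENNReal.ofReal r) volume).toReal ^ 2
              * |t - s| ^ ((r - 2) / r) := by
  refine ⟨2, fun u hu2 hur s t _ _ => ?_⟩
  simpa only [mul_assoc] using (concentration_mono hu2.integrable_norm_sq).abs_sub_le_of_le_add
    (g := fun d => 2 * ((eLpNorm u (ENNReal.ofReal r) volume).toReal ^ 2 * d ^ ((r - 2) / r)))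
    (fun a b hab => concentration_le_add hr.le hu2 hur hab) s t
end

section
/- There exists a universal constant K such that for all u ∈ H¹(ℝ) and all t > 0, ∫_ℝ |u|⁶ dx ≤ K · ρ(u,t)² · ( ∫_ℝ |u'|² dx + t^{-2} ∫_ℝ |u|² dx ), where ρ(u,t) = sup_{y} ∫_{|x−y|<t} |u|² dx. -/
open MeasureTheory Set

theorem integral_norm_mul_norm_le_sqrt_mul_sqrt {α E : Type*} [MeasurableSpace α]
    {μ : Measure α} [NormedAddCommGroup E] {f g : α → E} (hf : MemLp f 2 μ) (hg : MemLp g 2 μ) :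
    ∫ x, ‖f x‖ * ‖g x‖ ∂μ ≤ √(∫ x, ‖f x‖ ^ 2 ∂μ) * √(∫ x, ‖g x‖ ^ 2 ∂μ) := by
  have h := integral_mul_norm_le_Lp_mul_Lq (f := f) (g := g) (p := 2) (q := 2)
    Real.HolderConjugate.two_two (by rwa [ENNReal.ofReal_ofNat]) (by rwa [ENNReal.ofReal_ofNat])
  simpa only [Real.rpow_two, Real.sqrt_eq_rpow] using h

theorem integral_le_integral_of_forall_setIntegral_le {X ι : Type*} [MeasurableSpace X]
    {μ : Measure X} [Countable ι] {s : ι → Set X} (hs : ∀ i, MeasurableSet (s i))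
    (hdisj : Pairwise (Function.onFun Disjoint s)) (hcover : ⋃ i, s i = univ) {f g : X → ℝ}
    (hf₀ : 0 ≤ f) (hf : ∀ i, IntegrableOn f (s i) μ) (hg : Integrable g μ)
    (hfg : ∀ i, ∫ x in s i, f x ∂μ ≤ ∫ x in s i, g x ∂μ) :
    ∫ x, f x ∂μ ≤ ∫ x, g x ∂μ := by
  have hasSum_setIntegral {h : X → ℝ} (hh : Integrable h μ) :
      HasSum (fun i => ∫ x in s i, h x ∂μ) (∫ x, h x ∂μ) := by
    simpa only [hcover, setIntegral_univ] using
      hasSum_integral_iUnion hs hdisj (hcover ▸ hh.integrableOn)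
  have hg_sum := hasSum_setIntegral hg
  have hf_int : Integrable f μ := by
    rw [← integrableOn_univ, ← hcover]
    refine integrableOn_iUnion_of_summable_integral_norm hf
      (hg_sum.summable.of_nonneg_of_le (fun i => integral_nonneg fun _ => norm_nonneg _)
        fun i => ?_)
    simpa only [Real.norm_of_nonneg (hf₀ _)] using hfg i
  exact hasSum_le hfg (hasSum_setIntegral hf_int) hg_sum

section IntervalEstimates

variable {E : Type*} [NormedAddCommGroup E] [InnerProductSpace ℝ E] {u : ℝ → E} {a b t : ℝ}

theorem sq_norm_le_sq_norm_add_two_mul_integral (hd : Differentiable ℝ u)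
    (hu : MemLp u 2 (volume.restrict (Ioc a b)))
    (hu' : MemLp (deriv u) 2 (volume.restrict (Ioc a b))) {x y : ℝ}
    (hx : x ∈ Icc a b) (hy : y ∈ Icc a b) :
    ‖u x‖ ^ 2 ≤ ‖u y‖ ^ 2 + 2 * ∫ z in Ioc a b, ‖u z‖ * ‖deriv u z‖ := by
  set D : ℝ → ℝ := fun z => 2 * inner ℝ (u z) (deriv u z)
  have hD_le (z : ℝ) : ‖D z‖ ≤ 2 * (‖u z‖ * ‖deriv u z‖) := by
    simpa only [D, norm_mul, Real.norm_two, Real.norm_eq_abs, abs_two] using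
      mul_le_mul_of_nonneg_left (abs_real_inner_le_norm (u z) (deriv u z)) zero_le_two
  have hprod : IntegrableOn (fun z => ‖u z‖ * ‖deriv u z‖) (Ioc a b) :=
    hu.norm.integrable_mul hu'.norm
  have hD : IntegrableOn D (Ioc a b) :=
    (hprod.const_mul 2).mono'
      ((hd.continuous.aestronglyMeasurable.inner hu'.1).const_mul 2) (ae_of_all _ hD_le)
  have hsub : uIoc y x ⊆ Ioc a b := Ioc_subset_Ioc (le_min hy.1 hx.1) (max_le hy.2 hx.2)
  have hftc : ∫ z in y..x, D z = ‖u x‖ ^ 2 - ‖u y‖ ^ 2 :=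
    intervalIntegral.integral_eq_sub_of_hasDerivAt (fun z _ => (hd z).hasDerivAt.norm_sq)
      (intervalIntegrable_iff.2 (hD.mono_set hsub))
  calc ‖u x‖ ^ 2 = ‖u y‖ ^ 2 + ∫ z in y..x, D z := by rw [hftc]; ring
    _ ≤ ‖u y‖ ^ 2 + ∫ z in uIoc y x, ‖D z‖ := add_le_add_right
        ((Real.le_norm_self _).trans intervalIntegral.norm_integral_le_integral_norm_uIoc) _
    _ ≤ ‖u y‖ ^ 2 + ∫ z in Ioc a b, ‖D z‖ := add_le_add_right
        (setIntegral_mono_set hD.norm (ae_of_all _ fun _ => norm_nonneg _) hsub.eventuallyLE) _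
    _ ≤ ‖u y‖ ^ 2 + ∫ z in Ioc a b, 2 * (‖u z‖ * ‖deriv u z‖) := add_le_add_right
        (setIntegral_mono hD.norm (hprod.const_mul 2) hD_le) _
    _ = _ := by rw [integral_const_mul]


theorem sq_norm_le_of_mem_Icc (hd : Differentiable ℝ u)
    (hu : MemLp u 2 (volume.restrict (Ioc a (a + t))))
    (hu' : MemLp (deriv u) 2 (volume.restrict (Ioc a (a + t)))) (ht : 0 < t) {x : ℝ}
    (hx : x ∈ Icc a (a + t)) :
    ‖u x‖ ^ 2 ≤ t⁻¹ * (∫ y in Ioc a (a + t), ‖u y‖ ^ 2) +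
      2 * (√(∫ y in Ioc a (a + t), ‖u y‖ ^ 2) * √(∫ y in Ioc a (a + t), ‖deriv u y‖ ^ 2)) := by
  have hvol : volume.real (Ioc a (a + t)) = t := by
    rw [Real.volume_real_Ioc_of_le (by linarith)]; ring
  obtain ⟨y, hy, hy_le⟩ := exists_le_setAverage (f := fun y => ‖u y‖ ^ 2)
    (by simp [ht]) (by simp) hu.norm.integrable_sq
  rw [setAverage_eq, hvol, smul_eq_mul] at hy_le
  calc ‖u x‖ ^ 2 ≤ ‖u y‖ ^ 2 + 2 * ∫ z in Ioc a (a + t), ‖u z‖ * ‖deriv u z‖ :=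
        sq_norm_le_sq_norm_add_two_mul_integral hd hu hu' hx (Ioc_subset_Icc_self hy)
    _ ≤ _ := add_le_add hy_le
        (mul_le_mul_of_nonneg_left (integral_norm_mul_norm_le_sqrt_mul_sqrt hu hu') zero_le_two)

theorem norm_pow_four_le_of_mem_Icc (hd : Differentiable ℝ u)
    (hu : MemLp u 2 (volume.restrict (Ioc a (a + t))))
    (hu' : MemLp (deriv u) 2 (volume.restrict (Ioc a (a + t)))) (ht : 0 < t) {x : ℝ}
    (hx : x ∈ Icc a (a + t)) :
    ‖u x‖ ^ 4 ≤ 2 * t⁻¹ ^ 2 * (∫ y in Ioc a (a + t), ‖u y‖ ^ 2) ^ 2 +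
      8 * (∫ y in Ioc a (a + t), ‖u y‖ ^ 2) * ∫ y in Ioc a (a + t), ‖deriv u y‖ ^ 2 := by
  have hm : 0 ≤ ∫ y in Ioc a (a + t), ‖u y‖ ^ 2 := integral_nonneg fun _ => sq_nonneg _
  have he : 0 ≤ ∫ y in Ioc a (a + t), ‖deriv u y‖ ^ 2 := integral_nonneg fun _ => sq_nonneg _
  calc ‖u x‖ ^ 4 = (‖u x‖ ^ 2) ^ 2 := by ring
    _ ≤ _ := pow_le_pow_left₀ (sq_nonneg _) (sq_norm_le_of_mem_Icc hd hu hu' ht hx) 2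
    _ ≤ _ := add_sq_le
    _ = _ := by rw [mul_pow, mul_pow, mul_pow, Real.sq_sqrt hm, Real.sq_sqrt he]; ring

theorem setIntegral_norm_pow_six_le (hd : Differentiable ℝ u)
    (hu : MemLp u 2 (volume.restrict (Ioc a (a + t))))
    (hu' : MemLp (deriv u) 2 (volume.restrict (Ioc a (a + t)))) (ht : 0 < t) {R : ℝ}
    (hR : ∫ y in Ioc a (a + t), ‖u y‖ ^ 2 ≤ R) :
    ∫ x in Ioc a (a + t), ‖u x‖ ^ 6 ≤
      ∫ x in Ioc a (a + t), 8 * R ^ 2 * (‖deriv u x‖ ^ 2 + t⁻¹ ^ 2 * ‖u x‖ ^ 2) := by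
  set m := ∫ y in Ioc a (a + t), ‖u y‖ ^ 2
  set e := ∫ y in Ioc a (a + t), ‖deriv u y‖ ^ 2
  have hm : 0 ≤ m := integral_nonneg fun _ => sq_nonneg _
  have he : 0 ≤ e := integral_nonneg fun _ => sq_nonneg _
  have hnorm : Continuous fun x => ‖u x‖ := hd.continuous.norm
  have hu_sq : IntegrableOn (fun x => t⁻¹ ^ 2 * ‖u x‖ ^ 2) (Ioc a (a + t)) :=
    (hnorm.pow 2).integrableOn_Ioc.const_mul _
  calc ∫ x in Ioc a (a + t), ‖u x‖ ^ 6
      ≤ ∫ x in Ioc a (a + t), (2 * t⁻¹ ^ 2 * m ^ 2 + 8 * m * e) * ‖u x‖ ^ 2 := by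
        refine setIntegral_mono_on (hnorm.pow 6).integrableOn_Ioc
          ((hnorm.pow 2).integrableOn_Ioc.const_mul _) measurableSet_Ioc fun x hx => ?_
        calc ‖u x‖ ^ 6 = ‖u x‖ ^ 4 * ‖u x‖ ^ 2 := by ring
          _ ≤ _ := mul_le_mul_of_nonneg_right
            (norm_pow_four_le_of_mem_Icc hd hu hu' ht (Ioc_subset_Icc_self hx)) (sq_nonneg _)
    _ = m ^ 2 * (8 * e + 2 * (t⁻¹ ^ 2 * m)) := by rw [integral_const_mul]; ring
    _ ≤ R ^ 2 * (8 * e + 8 * (t⁻¹ ^ 2 * m)) := by gcongr; norm_num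
    _ = ∫ x in Ioc a (a + t), 8 * R ^ 2 * (‖deriv u x‖ ^ 2 + t⁻¹ ^ 2 * ‖u x‖ ^ 2) := by
        rw [integral_const_mul, integral_add hu'.norm.integrable_sq hu_sq, integral_const_mul]
        ring

end IntervalEstimates

theorem setIntegral_le_concentration {u : ℝ → ℂ} (hu : MemLp u 2 volume) {s : Set ℝ} {y t : ℝ}
    (hs : s ⊆ Ioo (y - t) (y + t)) : ∫ x in s, ‖u x‖ ^ 2 ≤ concentration u t := by
  have hint : Integrable (fun x => ‖u x‖ ^ 2) := hu.norm.integrable_sq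
  have hbdd : BddAbove (range fun y => ∫ x in Ioo (y - t) (y + t), ‖u x‖ ^ 2) :=
    ⟨∫ x, ‖u x‖ ^ 2, forall_mem_range.2 fun _ =>
      setIntegral_le_integral hint (ae_of_all _ fun _ => sq_nonneg _)⟩
  exact (setIntegral_mono_set hint.integrableOn (ae_of_all _ fun _ => sq_nonneg _)
    hs.eventuallyLE).trans (le_ciSup hbdd y)

/-- Localized Gagliardo–Nirenberg: there is a universal `K` such that for all
`u ∈ H¹(ℝ)` and `t > 0`,
`∫|u|⁶ ≤ K ρ(u,t)² (∫|u'|² + t⁻² ∫|u|²)`. -/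
theorem localized_gagliardo_nirenberg :
    ∃ K : ℝ, ∀ u : ℝ → ℂ,
      Differentiable ℝ u →
      MemLp u 2 (volume : Measure ℝ) →
      MemLp (deriv u) 2 (volume : Measure ℝ) →
      ∀ t : ℝ, 0 < t →
        ∫ x : ℝ, ‖u x‖ ^ 6
          ≤ K * concentration u t ^ 2 *
              ((∫ x : ℝ, ‖deriv u x‖ ^ 2) + t⁻¹ ^ 2 * ∫ x : ℝ, ‖u x‖ ^ 2) := by
  refine ⟨8, fun u hd hu hu' t ht => ?_⟩
  set cell : ℤ → Set ℝ := fun j => Ioc (j • t) (j • t + t)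
  have hcover : ⋃ j, cell j = univ := by simpa only [add_one_zsmul] using iUnion_Ioc_zsmul ht
  have hdisj : Pairwise (Function.onFun Disjoint cell) := by
    simpa only [add_one_zsmul] using pairwise_disjoint_Ioc_zsmul t
  have hcell_sub (j : ℤ) : cell j ⊆ Ioo (j • t + t / 2 - t) (j • t + t / 2 + t) :=
    fun x hx => ⟨by linarith [hx.1], by linarith [hx.2]⟩
  have hu_sq : Integrable fun x => ‖u x‖ ^ 2 := hu.norm.integrable_sq
  have hu'_sq : Integrable fun x => ‖deriv u x‖ ^ 2 := hu'.norm.integrable_sq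
  calc ∫ x, ‖u x‖ ^ 6
      ≤ ∫ x, 8 * concentration u t ^ 2 * (‖deriv u x‖ ^ 2 + t⁻¹ ^ 2 * ‖u x‖ ^ 2) :=
        integral_le_integral_of_forall_setIntegral_le (fun _ => measurableSet_Ioc) hdisj hcover
          (fun _ => by positivity) (fun _ => (hd.continuous.norm.pow 6).integrableOn_Ioc)
          ((hu'_sq.add (hu_sq.const_mul _)).const_mul _) fun j =>
            setIntegral_norm_pow_six_le hd (hu.restrict _) (hu'.restrict _) ht
              (setIntegral_le_concentration hu (hcell_sub j))
    _ = _ := by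
        rw [integral_const_mul, integral_add hu'_sq (hu_sq.const_mul _), integral_const_mul]
end

section
/- For complex numbers (or complex-valued functions) u, q, w, z with u = q + w + z and |z| ≤ |u|, and any p ≥ 2, one has | |u|^p − |q|^p − |w|^p | ≤ C_p |u|^{p−1} |z| whenever q and w have disjoint supports and |q| + |w| ≤ |u|. -/
/-!
Since `q` and `w` have disjoint supports, `‖q‖ ^ p + ‖w‖ ^ p = (‖q‖ + ‖w‖) ^ p` pointwise, so with
`b = ‖q‖ + ‖w‖` the claim is a bound on `‖u‖ ^ p - b ^ p` where `0 ≤ b ≤ ‖u‖`. By the mean value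
theorem this is at most `p ‖u‖ ^ (p - 1) (‖u‖ - b)`, and `‖u‖ - b ≤ ‖z‖` by the triangle inequality
applied to `u = q + w + z`. Hence `C = p` works.
-/

open Function

theorem Real.rpow_sub_rpow_le_mul_sub {a b p : ℝ} (hb : 0 ≤ b) (hba : b ≤ a) (hp : 1 ≤ p) :
    a ^ p - b ^ p ≤ p * a ^ (p - 1) * (a - b) := by
  refine (convex_Icc b a).image_sub_le_mul_sub_of_deriv_le
    (Real.continuous_rpow_const (by linarith)).continuousOn ?_ ?_ b ⟨le_rfl, hba⟩ a ⟨hba, le_rfl⟩ hba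
  · rw [interior_Icc]
    exact fun x hx =>
      (Real.differentiableAt_rpow_const_of_ne p (hb.trans_lt hx.1).ne').differentiableWithinAt
  · rw [interior_Icc]
    intro x hx
    rw [Real.deriv_rpow_const]
    gcongr
    · exact hb.trans hx.1.le
    · exact hx.2.le

theorem Real.abs_rpow_sub_rpow_le_mul_sub {a b p : ℝ} (hb : 0 ≤ b) (hba : b ≤ a) (hp : 1 ≤ p) :
    |a ^ p - b ^ p| ≤ p * a ^ (p - 1) * (a - b) := by
  rw [abs_of_nonneg (sub_nonneg.mpr (Real.rpow_le_rpow hb hba (by linarith)))]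
  exact Real.rpow_sub_rpow_le_mul_sub hb hba hp

theorem norm_rpow_add_norm_rpow_of_disjoint_support {α E : Type*} [NormedAddCommGroup E]
    {f g : α → E} (hfg : Disjoint (support f) (support g)) {p : ℝ} (hp : p ≠ 0) (x : α) :
    ‖f x‖ ^ p + ‖g x‖ ^ p = (‖f x‖ + ‖g x‖) ^ p := by
  have hzero : f x = 0 ∨ g x = 0 := by
    by_contra! h
    exact Set.disjoint_left.mp hfg h.1 h.2
  rcases hzero with h | h <;> simp [h, Real.zero_rpow hp]

/-- If `u = q + w + z` with `q, w` of disjoint supports, `|q|+|w| ≤ |u|` and `|z| ≤ |u|`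
pointwise, then for every `p ≥ 2` there is `C_p` with
`||u|^p − |q|^p − |w|^p| ≤ C_p |u|^{p−1} |z|` pointwise. -/
theorem power_splitting_estimate (p : ℝ) (hp : 2 ≤ p) :
    ∃ C : ℝ, ∀ u q w z : ℝ → ℂ,
      (∀ x, u x = q x + w x + z x) →
      Disjoint (support q) (support w) →
      (∀ x, ‖q x‖ + ‖w x‖ ≤ ‖u x‖) →
      (∀ x, ‖z x‖ ≤ ‖u x‖) →
      ∀ x : ℝ, |‖u x‖ ^ p - ‖q x‖ ^ p - ‖w x‖ ^ p| ≤ C * ‖u x‖ ^ (p - 1) * ‖z x‖ := by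
  refine ⟨p, fun u q w z hu hqw hle _ x => ?_⟩
  have hsplit := norm_rpow_add_norm_rpow_of_disjoint_support hqw (by positivity : p ≠ 0) x
  have hgap : ‖u x‖ - (‖q x‖ + ‖w x‖) ≤ ‖z x‖ := by
    linarith [hu x ▸ norm_add₃_le (a := q x) (b := w x) (c := z x)]
  calc |‖u x‖ ^ p - ‖q x‖ ^ p - ‖w x‖ ^ p| = |‖u x‖ ^ p - (‖q x‖ + ‖w x‖) ^ p| := by
        rw [sub_sub, hsplit]
    _ ≤ p * ‖u x‖ ^ (p - 1) * (‖u x‖ - (‖q x‖ + ‖w x‖)) :=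
        Real.abs_rpow_sub_rpow_le_mul_sub (by positivity) (hle x) (by linarith)
    _ ≤ p * ‖u x‖ ^ (p - 1) * ‖z x‖ := by gcongr
end

section
/- Let (v_n) ⊂ H¹(ℝ) satisfy ‖v_n‖_{L²} → ℓ with ℓ ≥ ‖Q‖_{L²}, ‖v_n'‖_{L²} → 1, and E(v_n) → 0. Assuming the sharp Gagliardo–Nirenberg inequality, the concentration parameter μ := lim_{t→∞} liminf_n ρ(v_n,t) satisfies μ ≥ (3/K)^{1/2}, where K is the constant in the localized Gagliardo–Nirenberg inequality ∫|u|⁶ ≤ K ρ(u,t)² (∫|u'|² + t^{-2}∫|u|²). -/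
open MeasureTheory Set Filter

/-- The squared L² norm of the ground state: `‖Q‖_{L²}² = √3 π / 2`. -/
noncomputable def QmassSq : ℝ := Real.sqrt 3 * Real.pi / 2

/-- If `(v_n) ⊂ H¹(ℝ)` satisfies `‖v_n‖_{L²} → ℓ ≥ ‖Q‖_{L²}`, `‖v_n'‖_{L²} → 1` and
`E(v_n) → 0`, then (assuming the sharp Gagliardo–Nirenberg inequality and the localized
Gagliardo–Nirenberg inequality with constant `K`) the concentration parameter
`μ = lim_{t→∞} liminf_n ρ(v_n,t)` satisfies `μ ≥ (3/K)^{1/2}`. -/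
theorem concentration_parameter_lower_bound
    (v : ℕ → ℝ → ℂ) (K ℓ μ : ℝ) (hK : 0 < K)
    (hdiff : ∀ n, Differentiable ℝ (v n))
    (hv2 : ∀ n, Integrable (fun x : ℝ => ‖v n x‖ ^ 2) (volume : Measure ℝ))
    (hv6 : ∀ n, Integrable (fun x : ℝ => ‖v n x‖ ^ 6) (volume : Measure ℝ))
    (hvd2 : ∀ n, Integrable (fun x : ℝ => ‖deriv (v n) x‖ ^ 2) (volume : Measure ℝ))
    (hmass : Tendsto (fun n => Real.sqrt (∫ x : ℝ, ‖v n x‖ ^ 2)) atTop (nhds ℓ))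
    (hℓ : Real.sqrt QmassSq ≤ ℓ)
    (hgrad : Tendsto (fun n => ∫ x : ℝ, ‖deriv (v n) x‖ ^ 2) atTop (nhds 1))
    (henergy : Tendsto (fun n =>
      (1/2) * (∫ x : ℝ, ‖deriv (v n) x‖ ^ 2) - (1/6) * ∫ x : ℝ, ‖v n x‖ ^ 6)
      atTop (nhds 0))
    (hGN : ∀ n, (1/6) * ∫ x : ℝ, ‖v n x‖ ^ 6
      ≤ (1/2) * (QmassSq ^ 2)⁻¹ * (∫ x : ℝ, ‖deriv (v n) x‖ ^ 2)
          * (∫ x : ℝ, ‖v n x‖ ^ 2) ^ 2)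
    (hloc : ∀ n, ∀ t : ℝ, 0 < t →
      ∫ x : ℝ, ‖v n x‖ ^ 6
        ≤ K * concentration (v n) t ^ 2 *
            ((∫ x : ℝ, ‖deriv (v n) x‖ ^ 2) + t⁻¹ ^ 2 * ∫ x : ℝ, ‖v n x‖ ^ 2))
    (hμ : Tendsto (fun t : ℝ => liminf (fun n => concentration (v n) t) atTop)
      atTop (nhds μ)) :
    Real.sqrt (3 / K) ≤ μ := by
  set ρ : ℕ → ℝ → ℝ := fun n t => concentration (v n) t with hρ
  have hmassnn : ∀ n, 0 ≤ ∫ x : ℝ, ‖v n x‖ ^ 2 := fun n =>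
    integral_nonneg fun x => by positivity
  have hρnn : ∀ n t, 0 ≤ ρ n t := fun n t => Real.iSup_nonneg fun y =>
    integral_nonneg fun x => by positivity
  have hρle : ∀ n t, ρ n t ≤ ∫ x : ℝ, ‖v n x‖ ^ 2 := fun n t =>
    Real.iSup_le (fun y => setIntegral_le_integral (hv2 n)
      (Eventually.of_forall fun x => by positivity)) (hmassnn n)
  -- mass → ℓ²
  have hmass2 : Tendsto (fun n => ∫ x : ℝ, ‖v n x‖ ^ 2) atTop (nhds (ℓ ^ 2)) := by
    have := hmass.pow 2
    refine this.congr fun n => ?_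
    exact Real.sq_sqrt (hmassnn n)
  -- I6 → 3
  have hI6 : Tendsto (fun n => ∫ x : ℝ, ‖v n x‖ ^ 6) atTop (nhds 3) := by
    have h := ((hgrad.const_mul (1/2 : ℝ)).sub henergy).const_mul (6 : ℝ)
    have : (6 : ℝ) * ((1/2) * 1 - 0) = 3 := by norm_num
    rw [this] at h
    refine h.congr fun n => by ring
  -- Step: for each ε ∈ (0,3), μ ≥ √((3-ε)/(K(1+ε)))
  have key : ∀ ε ∈ Ioo (0:ℝ) 3, Real.sqrt ((3 - ε) / (K * (1 + ε))) ≤ μ := by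
    intro ε hε
    obtain ⟨hε0, hε3⟩ := hε
    -- eventual bounds in n
    have hEv : ∀ᶠ n in atTop, 3 - ε ≤ (∫ x : ℝ, ‖v n x‖ ^ 6)
        ∧ (∫ x : ℝ, ‖deriv (v n) x‖ ^ 2) ≤ 1 + ε
        ∧ (∫ x : ℝ, ‖v n x‖ ^ 2) ≤ ℓ ^ 2 + ε := by
      filter_upwards [hI6.eventually (eventually_ge_nhds (by linarith : (3:ℝ) - ε < 3)),
        hgrad.eventually (eventually_le_nhds (by linarith : (1:ℝ) < 1 + ε)),
        hmass2.eventually (eventually_le_nhds (by linarith : ℓ^2 < ℓ^2 + ε))] with n h1 h2 h3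
      exact ⟨h1, h2, h3⟩
    -- for each t > 0, liminf bound
    have hstep : ∀ t : ℝ, 0 < t →
        Real.sqrt ((3 - ε) / (K * (1 + ε + t⁻¹ ^ 2 * (ℓ ^ 2 + ε)))) ≤
          liminf (fun n => ρ n t) atTop := by
      intro t ht
      have hc : 0 < 1 + ε + t⁻¹ ^ 2 * (ℓ ^ 2 + ε) := by
        have h1 : 0 ≤ t⁻¹ ^ 2 := sq_nonneg _
        have h2 : 0 ≤ ℓ ^ 2 := sq_nonneg _
        nlinarith
      refine le_liminf_of_le ?_ ?_
      · refine IsBoundedUnder.isCoboundedUnder_ge ⟨ℓ ^ 2 + ε, eventually_map.mpr ?_⟩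
        filter_upwards [hEv] with n hn
        exact (hρle n t).trans hn.2.2
      · filter_upwards [hEv] with n ⟨h1, h2, h3⟩
        have hbound : (∫ x : ℝ, ‖v n x‖ ^ 6) ≤ K * ρ n t ^ 2 *
            ((∫ x : ℝ, ‖deriv (v n) x‖ ^ 2) + t⁻¹ ^ 2 * ∫ x : ℝ, ‖v n x‖ ^ 2) := hloc n t ht
        have hρ2 : (3 - ε) / (K * (1 + ε + t⁻¹ ^ 2 * (ℓ ^ 2 + ε))) ≤ ρ n t ^ 2 := by
          rw [div_le_iff₀ (by positivity)]
          have htinv : 0 ≤ t⁻¹ ^ 2 := sq_nonneg _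
          have h4 : (∫ x : ℝ, ‖deriv (v n) x‖ ^ 2) + t⁻¹ ^ 2 * ∫ x : ℝ, ‖v n x‖ ^ 2
              ≤ (1 + ε) + t⁻¹ ^ 2 * (ℓ ^ 2 + ε) :=
            add_le_add h2 (mul_le_mul_of_nonneg_left h3 htinv)
          have h5 := mul_le_mul_of_nonneg_left h4
            (mul_nonneg hK.le (sq_nonneg (ρ n t)))
          nlinarith
        calc Real.sqrt ((3 - ε) / (K * (1 + ε + t⁻¹ ^ 2 * (ℓ ^ 2 + ε))))
            ≤ Real.sqrt (ρ n t ^ 2) := Real.sqrt_le_sqrt hρ2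
          _ = ρ n t := Real.sqrt_sq (hρnn n t)
    -- take t → ∞
    have hb : Tendsto (fun t : ℝ => Real.sqrt ((3 - ε) / (K * (1 + ε + t⁻¹ ^ 2 * (ℓ ^ 2 + ε)))))
        atTop (nhds (Real.sqrt ((3 - ε) / (K * (1 + ε))))) := by
      have h0 : Tendsto (fun t : ℝ => t⁻¹ ^ 2 * (ℓ ^ 2 + ε)) atTop (nhds 0) := by
        have := (tendsto_inv_atTop_zero (𝕜 := ℝ)).pow 2
        simpa using this.mul_const (ℓ ^ 2 + ε)
      have h1 : Tendsto (fun t : ℝ => K * (1 + ε + t⁻¹ ^ 2 * (ℓ ^ 2 + ε))) atTop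
          (nhds (K * (1 + ε))) := by
        have := (h0.const_add (1 + ε)).const_mul K
        simpa using this
      have h2 : Tendsto (fun t : ℝ => (3 - ε) / (K * (1 + ε + t⁻¹ ^ 2 * (ℓ ^ 2 + ε)))) atTop
          (nhds ((3 - ε) / (K * (1 + ε)))) :=
        tendsto_const_nhds.div h1 (by positivity)
      exact h2.sqrt
    refine le_of_tendsto_of_tendsto hb hμ ?_
    filter_upwards [eventually_gt_atTop (0:ℝ)] with t ht
    exact hstep t ht
  -- take ε → 0⁺
  have hcont : Tendsto (fun ε : ℝ => Real.sqrt ((3 - ε) / (K * (1 + ε))))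
      (nhdsWithin 0 (Ioi 0)) (nhds (Real.sqrt (3 / K))) := by
    have h1 : Tendsto (fun ε : ℝ => (3 - ε) / (K * (1 + ε))) (nhds 0)
        (nhds ((3 - 0) / (K * (1 + 0)))) := by
      exact (tendsto_const_nhds.sub tendsto_id).div
        ((tendsto_const_nhds.add tendsto_id).const_mul K) (by positivity)
    have h2 : Tendsto (fun ε : ℝ => Real.sqrt ((3 - ε) / (K * (1 + ε))))
        (nhdsWithin (0:ℝ) (Ioi 0)) (nhds (Real.sqrt ((3 - 0) / (K * (1 + 0))))) :=
      (h1.mono_left nhdsWithin_le_nhds).sqrt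
    simpa using h2
  refine le_of_tendsto_of_tendsto hcont tendsto_const_nhds ?_
  filter_upwards [Ioo_mem_nhdsGT_of_mem (left_mem_Ico.mpr (by norm_num : (0:ℝ) < 3))] with ε hε
  exact key ε hε
end
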